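/- Let L, M, N be positive integers with M ≥ 2, let λ ∈ (0,1) with 1/M ≤ λ, and suppose N ≤ 2^{L·(λ·log₂ M − 1)} with λ·log₂ M > 1. Let F_1,…,F_N be independent random functions from {1,…,L} to {1,…,M}, where each value F_i(l) is chosen independently and uniformly in {1,…,M}. Then with positive probability, for every pair i ≠ j one has |{l : F_i(l) = F_j(l)}| ≤ λ·L. -/

import Mathlib

open MeasureTheory ProbabilityTheory
open scoped ENNReal

/-!
For two distinct rows `i ≠ j`, the agreement events `F i l = F j l` at positions `l ∈ S`
hold jointly with probability at most `M^{-|S|}`: split according to the common value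
`g : S → Fin M`, each of the `M^{|S|}` pieces fixes `2|S|` independent uniform coordinates.
Hence at least `k = ⌈λL⌉` agreements occur with probability at most
`C(L, k) M^{-k} ≤ 2^L M^{-λL} = 2^{-L(λ log₂ M - 1)}`, and a union bound over the
`N(N-1)` ordered pairs leaves the good event with positive probability.
-/

open Finset

namespace ProbabilityTheory.iIndepFun

variable {Ω ι κ β : Type*} [MeasurableSpace Ω] {P : Measure Ω}
  [Fintype β] [Nonempty β] [MeasurableSpace β] [MeasurableSingletonClass β]
  {X : ι → κ → Ω → β}

theorem measure_biInter_agree_le (hindep : iIndepFun (fun p : ι × κ => X p.1 p.2) P)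
    (hunif : ∀ i l b, P {ω | X i l ω = b} = (Fintype.card β : ℝ≥0∞)⁻¹)
    {i j : ι} (hij : i ≠ j) (S : Finset κ) :
    P (⋂ l ∈ S, {ω | X i l ω = X j l ω}) ≤ (Fintype.card β : ℝ≥0∞)⁻¹ ^ #S := by
  classical
  set q : ℝ≥0∞ := (Fintype.card β : ℝ≥0∞)⁻¹
  let row : Bool × S → ι × κ := fun b => (if b.1 then i else j, b.2)
  have hrow : row.Injective := by
    rintro ⟨b, l⟩ ⟨b', l'⟩ h
    simp only [row, Prod.mk.injEq] at h
    obtain ⟨hb, hl⟩ := h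
    refine Prod.ext ?_ (Subtype.ext hl)
    cases b <;> cases b' <;> simp_all [eq_comm]
  have hcover : (⋂ l ∈ S, {ω | X i l ω = X j l ω}) ⊆
      ⋃ g : S → β, ⋂ b : Bool × S, {ω | X (row b).1 (row b).2 ω = g b.2} := by
    intro ω hω
    simp only [Set.mem_iInter] at hω
    refine Set.mem_iUnion.2 ⟨fun l => X i l ω, Set.mem_iInter.2 ?_⟩
    rintro ⟨_ | _, l, hl⟩
    · exact (hω l hl).symm
    · exact rfl
  have hpiece : ∀ g : S → β,
      P (⋂ b : Bool × S, {ω | X (row b).1 (row b).2 ω = g b.2}) = q ^ (2 * #S) := by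
    intro g
    rw [(hindep.precomp hrow).meas_iInter (s := fun b => {ω | X (row b).1 (row b).2 ω = g b.2})
      fun b => ⟨{g b.2}, measurableSet_singleton _, rfl⟩]
    simp [hunif, q, Fintype.card_bool]
  calc P (⋂ l ∈ S, {ω | X i l ω = X j l ω})
      ≤ ∑ g : S → β, q ^ (2 * #S) :=
        (measure_mono hcover).trans ((measure_iUnion_fintype_le _ _).trans
          (Finset.sum_le_sum fun g _ => (hpiece g).le))
    _ = q ^ #S := by
        have hq : (Fintype.card β : ℝ≥0∞) * q = 1 :=
          ENNReal.mul_inv_cancel (by simp) (by simp)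
        rw [sum_const, card_univ, Fintype.card_fun, Fintype.card_coe, nsmul_eq_mul, two_mul,
          pow_add, ← mul_assoc, Nat.cast_pow, ← mul_pow, hq, one_pow, one_mul]

theorem measure_le_card_agree_le [Fintype κ] [DecidableEq β]
    (hindep : iIndepFun (fun p : ι × κ => X p.1 p.2) P)
    (hunif : ∀ i l b, P {ω | X i l ω = b} = (Fintype.card β : ℝ≥0∞)⁻¹)
    {i j : ι} (hij : i ≠ j) (k : ℕ) :
    P {ω | k ≤ #{l | X i l ω = X j l ω}} ≤
      (Fintype.card κ).choose k * (Fintype.card β : ℝ≥0∞)⁻¹ ^ k := by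
  classical
  have hcover : {ω | k ≤ #{l | X i l ω = X j l ω}} ⊆
      ⋃ S ∈ powersetCard k univ, ⋂ l ∈ S, {ω | X i l ω = X j l ω} := by
    intro ω hω
    obtain ⟨S, hS, hcard⟩ := exists_subset_card_eq hω
    refine Set.mem_biUnion (mem_powersetCard.2 ⟨subset_univ S, hcard⟩) (Set.mem_iInter₂.2 ?_)
    exact fun l hl => (mem_filter.1 (hS hl)).2
  calc P {ω | k ≤ #{l | X i l ω = X j l ω}}
      ≤ ∑ S ∈ powersetCard k univ, P (⋂ l ∈ S, {ω | X i l ω = X j l ω}) :=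
        (measure_mono hcover).trans (measure_biUnion_finset_le _ _)
    _ ≤ ∑ S ∈ powersetCard k (univ : Finset κ), (Fintype.card β : ℝ≥0∞)⁻¹ ^ k :=
        sum_le_sum fun S hS => (mem_powersetCard.1 hS).2 ▸
          hindep.measure_biInter_agree_le hunif hij S
    _ = (Fintype.card κ).choose k * (Fintype.card β : ℝ≥0∞)⁻¹ ^ k := by
        rw [sum_const, card_powersetCard, card_univ, nsmul_eq_mul]

end ProbabilityTheory.iIndepFun

theorem Nat.choose_mul_inv_pow_le_two_rpow {x lam : ℝ} (hx : 1 ≤ x) (L k : ℕ) (hk : lam * L ≤ k) :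
    L.choose k * x⁻¹ ^ k ≤ (2 : ℝ) ^ (-(L : ℝ) * (lam * Real.logb 2 x - 1)) := by
  have hx0 : 0 < x := one_pos.trans_le hx
  calc (L.choose k : ℝ) * x⁻¹ ^ k
      ≤ 2 ^ (L : ℝ) * x ^ (-(lam * L)) := by
        rw [inv_pow, ← Real.rpow_natCast x, ← Real.rpow_neg hx0.le, Real.rpow_natCast]
        gcongr
        exact_mod_cast L.choose_le_two_pow k
    _ = (2 : ℝ) ^ (-(L : ℝ) * (lam * Real.logb 2 x - 1)) := by
        rw [← Real.rpow_logb two_pos (by norm_num) hx0, ← Real.rpow_mul zero_le_two,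
          ← Real.rpow_add two_pos, Real.rpow_logb two_pos (by norm_num) hx0]
        ring_nf

theorem MeasureTheory.measure_pos_of_measure_compl_lt_one {Ω : Type*} [MeasurableSpace Ω]
    {P : Measure Ω} [IsProbabilityMeasure P] {s : Set Ω} (hs : P sᶜ < 1) : 0 < P s := by
  refine pos_iff_ne_zero.2 fun h0 => hs.not_ge ?_
  calc 1 = P (s ∪ sᶜ) := by rw [Set.union_compl_self, measure_univ]
    _ ≤ P s + P sᶜ := measure_union_le s sᶜ
    _ = P sᶜ := by rw [h0, zero_add]

theorem MeasureTheory.measure_biUnion_offDiag_le {Ω ι : Type*} [MeasurableSpace Ω]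
    {P : Measure Ω} [Fintype ι] [DecidableEq ι] {A : ι × ι → Set Ω} {t : ℝ}
    (hA : ∀ p ∈ (univ : Finset ι).offDiag, P (A p) ≤ ENNReal.ofReal t) :
    P (⋃ p ∈ (univ : Finset ι).offDiag, A p) ≤
      ENNReal.ofReal (Fintype.card ι * (Fintype.card ι - 1) * t) := by
  calc P (⋃ p ∈ (univ : Finset ι).offDiag, A p)
      ≤ #(univ : Finset ι).offDiag • ENNReal.ofReal t :=
        (measure_biUnion_finset_le _ _).trans (sum_le_card_nsmul _ _ _ hA)
    _ = ENNReal.ofReal (Fintype.card ι * (Fintype.card ι - 1) * t) := by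
        rw [offDiag_card, card_univ, nsmul_eq_mul, ← ENNReal.ofReal_natCast,
          ← ENNReal.ofReal_mul (Nat.cast_nonneg _), Nat.cast_sub (Nat.le_mul_self _)]
        push_cast
        ring_nf

theorem stmt6_general {Ω : Type*} [MeasurableSpace Ω] (P : Measure Ω) [IsProbabilityMeasure P]
    (L M N : ℕ) (hM : 2 ≤ M)
    (lam : ℝ)
    (hNunion : (N : ℝ) * ((N : ℝ) - 1) * 2 ^ (-(L : ℝ) * (lam * Real.logb 2 M - 1)) < 1)
    (F : Fin N → Ω → (Fin L → Fin M))
    (hindep : iIndepFun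
      (fun (p : Fin N × Fin L) ω => F p.1 ω p.2) P)
    (hunif : ∀ (i : Fin N) (l : Fin L) (m : Fin M), P {ω | F i ω l = m} = 1 / (M : ℝ≥0∞)) :
    0 < P {ω | ∀ i j : Fin N, i ≠ j →
      ((Finset.univ.filter fun l : Fin L => F i ω l = F j ω l).card : ℝ) ≤ lam * L} := by
  have : Nonempty (Fin M) := ⟨⟨0, by omega⟩⟩
  set k := ⌈lam * L⌉₊
  set t : ℝ := 2 ^ (-(L : ℝ) * (lam * Real.logb 2 M - 1))
  let Bad : Fin N × Fin N → Set Ω := fun p => {ω | k ≤ #{l | F p.1 ω l = F p.2 ω l}}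
  have hcover : {ω | ∀ i j : Fin N, i ≠ j →
      ((Finset.univ.filter fun l : Fin L => F i ω l = F j ω l).card : ℝ) ≤ lam * L}ᶜ ⊆
      ⋃ p ∈ univ.offDiag, Bad p := by
    intro ω hω
    simp only [Set.mem_compl_iff, Set.mem_ofPred_eq, not_forall, not_le] at hω
    obtain ⟨i, j, hij, hlt⟩ := hω
    have hk : k ≤ #{l | F i ω l = F j ω l} := Nat.ceil_le.2 hlt.le
    exact Set.mem_biUnion (x := (i, j)) (mem_offDiag.2 ⟨mem_univ i, mem_univ j, hij⟩) hk
  have hpair : ∀ p ∈ univ.offDiag, P (Bad p) ≤ ENNReal.ofReal t := by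
    intro p hp
    calc P (Bad p) ≤ L.choose k * (M : ℝ≥0∞)⁻¹ ^ k := by
          simpa using hindep.measure_le_card_agree_le (X := fun i l ω => F i ω l)
            (by simpa using hunif) (by simpa using hp) k
      _ = ENNReal.ofReal (L.choose k * (M : ℝ)⁻¹ ^ k) := by
          rw [ENNReal.ofReal_mul (by positivity), ENNReal.ofReal_pow (by positivity),
            ENNReal.ofReal_inv_of_pos (by positivity), ENNReal.ofReal_natCast,
            ENNReal.ofReal_natCast]
      _ ≤ ENNReal.ofReal t :=
          ENNReal.ofReal_le_ofReal (Nat.choose_mul_inv_pow_le_two_rpow (by norm_cast; omega)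
            L k (Nat.le_ceil _))
  refine measure_pos_of_measure_compl_lt_one ?_
  calc _ ≤ P (⋃ p ∈ univ.offDiag, Bad p) := measure_mono hcover
    _ ≤ ENNReal.ofReal (N * (N - 1) * t) := by
        simpa using measure_biUnion_offDiag_le hpair
    _ < 1 := ENNReal.ofReal_lt_one.2 hNunion

/-- Random-coloring existence: if `F_1,…,F_N : {1,…,L} → {1,…,M}` are uniformly random
independent functions, `1/M ≤ λ`, `λ·log₂ M > 1`, `N ≤ 2^{L(λ log₂ M − 1)}` and
`N(N−1)·2^{-L(λ log₂ M − 1)} < 1`, then with positive probability every pair `i ≠ j`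
collides on at most a `λ`-fraction of `{1,…,L}`. -/
theorem stmt6 {Ω : Type*} [MeasurableSpace Ω] (P : Measure Ω) [IsProbabilityMeasure P]
    (L M N : ℕ) (hL : 0 < L) (hM : 2 ≤ M) (hN : 0 < N)
    (lam : ℝ) (hlam0 : 0 < lam) (hlam1 : lam < 1) (hMlam : 1 / (M : ℝ) ≤ lam)
    (hc : 1 < lam * Real.logb 2 M)
    (hNsize : (N : ℝ) ≤ 2 ^ ((L : ℝ) * (lam * Real.logb 2 M - 1)))
    (hNunion : (N : ℝ) * ((N : ℝ) - 1) * 2 ^ (-(L : ℝ) * (lam * Real.logb 2 M - 1)) < 1)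
    (F : Fin N → Ω → (Fin L → Fin M))
    (hmeas : ∀ (i : Fin N) (l : Fin L), Measurable fun ω => F i ω l)
    (hindep : iIndepFun
      (fun (p : Fin N × Fin L) ω => F p.1 ω p.2) P)
    (hunif : ∀ (i : Fin N) (l : Fin L) (m : Fin M), P {ω | F i ω l = m} = 1 / (M : ℝ≥0∞)) :
    0 < P {ω | ∀ i j : Fin N, i ≠ j →
      ((Finset.univ.filter fun l : Fin L => F i ω l = F j ω l).card : ℝ) ≤ lam * L} :=
  stmt6_general P L M N hM lam hNunion F hindep hunif
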